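/- arXiv:1709.04443 — 2 statements merged into one kernel-verified Lean document; each statement's English description precedes it below -/
import Mathlib

section
/- For any finite multiset S of natural numbers, any positive integer m, and any natural number n, φ(Z(m−1) ∪ S, n) ≤ φ(Z(m) ∪ S, n) + 1, where ∪ denotes multiset union. -/
/-- `Zms m` is the set of powers of 2 corresponding to the 0 digits in the binary
expansion of `m` (as a multiset; `Zms 0` is empty). -/
def Zms (m : ℕ) : Multiset ℕ :=
  if m = 0 then 0
  else ((Finset.range (Nat.log 2 m + 1)).filter fun j => ¬m.testBit j).val.map (2 ^ ·)

/-- `phi S n` is the maximal sum of a sub-multiset `T` of `S` subject to `T.sum ≤ n`. -/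
noncomputable def phi (S : Multiset ℕ) (n : ℕ) : ℕ :=
  sSup {t : ℕ | ∃ T ≤ S, T.sum = t ∧ t ≤ n}

/-! Write `m = 2 ^ k * (2 * b + 1)`. If `b = 0`, then `m - 1 = 2 ^ k - 1` has no zero digit and
the claim is monotonicity of `phi`. Otherwise, going from `m` to `m - 1` turns the digit `2 ^ k`
off and the digits `1, 2, …, 2 ^ (k - 1)` on, so `Z(m - 1) + {1, …, 2 ^ (k - 1)} = Z(m) + {2 ^ k}`.
Given an optimal `T ≤ Z(m - 1) + S`, the multiset `T + {1, …, 2 ^ (k - 1)}` lies in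
`Z(m) + S + {2 ^ k}`: if it uses `2 ^ k`, removing it leaves a sub-multiset of `Z(m) + S` of sum
`‖T‖ - 1`; otherwise `T` itself already lies in `Z(m) + S`. -/

open Finset

lemma phi_bddAbove (S : Multiset ℕ) (n : ℕ) : BddAbove {t : ℕ | ∃ T ≤ S, T.sum = t ∧ t ≤ n} :=
  ⟨n, fun _ ⟨_, _, _, hn⟩ => hn⟩

lemma exists_le_sum_eq_phi (S : Multiset ℕ) (n : ℕ) :
    ∃ T ≤ S, T.sum = phi S n ∧ phi S n ≤ n :=
  Nat.sSup_mem (s := {t : ℕ | ∃ T ≤ S, T.sum = t ∧ t ≤ n})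
    ⟨0, 0, Multiset.zero_le S, rfl, Nat.zero_le n⟩ (phi_bddAbove S n)

lemma sum_le_phi {S T : Multiset ℕ} {n : ℕ} (hT : T ≤ S) (hn : T.sum ≤ n) : T.sum ≤ phi S n :=
  le_csSup (phi_bddAbove S n) ⟨T, hT, rfl, hn⟩

lemma phi_mono {S S' : Multiset ℕ} (h : S ≤ S') (n : ℕ) : phi S n ≤ phi S' n := by
  obtain ⟨T, hT, hsum, hn⟩ := exists_le_sum_eq_phi S n
  rw [← hsum]
  exact sum_le_phi (hT.trans h) (hsum.trans_le hn)

lemma phi_add_le_phi_add_add_one {A B U : Multiset ℕ} {u : ℕ} (hAB : A + U = u ::ₘ B)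
    (hu : U.sum + 1 = u) (S : Multiset ℕ) (n : ℕ) : phi (A + S) n ≤ phi (B + S) n + 1 := by
  obtain ⟨T, hT, hsum, hn⟩ := exists_le_sum_eq_phi (A + S) n
  have hTU : T + U ≤ u ::ₘ (B + S) := calc
    T + U ≤ A + S + U := add_le_add_left hT U
    _ = u ::ₘ (B + S) := by rw [add_right_comm, hAB, Multiset.cons_add]
  by_cases hmem : u ∈ T + U
  · have hsum' : u + ((T + U).erase u).sum = T.sum + U.sum := by
      rw [Multiset.sum_erase hmem, Multiset.sum_add]
    have := sum_le_phi (Multiset.erase_le_iff_le_cons.mpr hTU) (by omega : _ ≤ n)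
    omega
  · have hTle : T ≤ B + S :=
      (Multiset.le_add_right T U).trans ((Multiset.le_cons_of_notMem hmem).mp hTU)
    have := sum_le_phi hTle (hsum.trans_le hn)
    omega

lemma Zms_two_pow_sub_one (k : ℕ) : Zms (2 ^ k - 1) = 0 := by
  unfold Zms
  split_ifs with h
  · rfl
  · have hlog : Nat.log 2 (2 ^ k - 1) < k := Nat.log_lt_of_lt_pow h (by omega)
    rw [filter_false_of_mem fun j hj => by
      rw [mem_range] at hj
      simp only [Nat.testBit_two_pow_sub_one, decide_eq_true_eq, not_not]
      omega]
    rfl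

lemma log_two_pow_mul_add {i b r : ℕ} (hb : b ≠ 0) (hr : r < 2 ^ i) :
    Nat.log 2 (2 ^ i * b + r) = Nat.log 2 b + i := by
  have hdiv : (2 ^ i * b + r) / 2 ^ i = b := by
    rw [Nat.mul_add_div (by positivity), Nat.div_eq_of_lt hr, add_zero]
  have hi : i ≤ Nat.log 2 (2 ^ i * b + r) :=
    Nat.le_log_of_pow_le one_lt_two (le_add_right (Nat.le_mul_of_pos_right _ (by omega)))
  have := Nat.log_div_base_pow 2 (2 ^ i * b + r) i
  rw [hdiv] at this
  omega

section bits

variable (k b : ℕ)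

lemma testBit_two_pow_succ_mul_add_two_pow (j : ℕ) :
    (2 ^ (k + 1) * b + 2 ^ k).testBit j =
      if j < k + 1 then decide (k = j) else b.testBit (j - (k + 1)) := by
  rw [Nat.testBit_two_pow_mul_add _ (Nat.pow_lt_pow_succ one_lt_two), Nat.testBit_two_pow]

lemma testBit_two_pow_succ_mul_add_two_pow_sub_one (j : ℕ) :
    (2 ^ (k + 1) * b + 2 ^ k - 1).testBit j =
      if j < k + 1 then decide (j < k) else b.testBit (j - (k + 1)) := by
  rw [Nat.add_sub_assoc Nat.one_le_two_pow, Nat.testBit_two_pow_mul_add _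
    ((Nat.sub_le _ _).trans_lt (Nat.pow_lt_pow_succ one_lt_two)),
    Nat.testBit_two_pow_sub_one]

lemma Zms_pred_add_map_range (hb : b ≠ 0) :
    Zms (2 ^ (k + 1) * b + 2 ^ k - 1) + (range k).val.map (2 ^ ·) =
      2 ^ k ::ₘ Zms (2 ^ (k + 1) * b + 2 ^ k) := by
  have hpow : 0 < 2 ^ k := Nat.two_pow_pos k
  have hlt : 2 ^ k < 2 ^ (k + 1) := Nat.pow_lt_pow_succ one_lt_two
  have hlog : Nat.log 2 (2 ^ (k + 1) * b + 2 ^ k) = Nat.log 2 b + (k + 1) :=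
    log_two_pow_mul_add hb hlt
  have hlog' : Nat.log 2 (2 ^ (k + 1) * b + 2 ^ k - 1) = Nat.log 2 b + (k + 1) := by
    rw [Nat.add_sub_assoc hpow, log_two_pow_mul_add hb (by omega)]
  have hm : 2 ^ (k + 1) * b ≠ 0 := by positivity
  unfold Zms
  rw [if_neg (by omega), if_neg (by omega), hlog, hlog', ← Multiset.map_add, ← Multiset.map_cons]
  congr 1
  have hk : k ∉ (range (Nat.log 2 b + (k + 1) + 1)).filter
      fun j => ¬(2 ^ (k + 1) * b + 2 ^ k).testBit j := by
    simp [testBit_two_pow_succ_mul_add_two_pow]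
  rw [Multiset.Nodup.ext ?_ ((Finset.nodup _).cons hk)]
  · intro j
    simp only [Multiset.mem_add, Multiset.mem_cons, Finset.mem_val, mem_filter, mem_range,
      testBit_two_pow_succ_mul_add_two_pow, testBit_two_pow_succ_mul_add_two_pow_sub_one]
    grind
  · refine Multiset.nodup_add.mpr ⟨Finset.nodup _, Finset.nodup _, Finset.disjoint_val.mpr ?_⟩
    simp only [Finset.disjoint_left, mem_filter, mem_range,
      testBit_two_pow_succ_mul_add_two_pow_sub_one]
    grind

end bits

/-- For any multiset `S`, positive integer `m` and natural number `n`,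
`phi(Z(m-1) ∪ S, n) ≤ phi(Z(m) ∪ S, n) + 1`. -/
theorem phi_pred_le (S : Multiset ℕ) (m : ℕ) (hm : 1 ≤ m) (n : ℕ) :
    phi (Zms (m - 1) + S) n ≤ phi (Zms m + S) n + 1 := by
  obtain ⟨k, _, ⟨b, rfl⟩, rfl⟩ := Nat.exists_eq_two_pow_mul_odd (Nat.one_le_iff_ne_zero.mp hm)
  rcases eq_or_ne b 0 with rfl | hb
  · rw [mul_zero, zero_add, mul_one, Zms_two_pow_sub_one, zero_add]
    exact (phi_mono (Multiset.le_add_left _ _) n).trans (Nat.le_succ _)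
  · rw [show 2 ^ k * (2 * b + 1) = 2 ^ (k + 1) * b + 2 ^ k by ring]
    refine phi_add_le_phi_add_add_one (Zms_pred_add_map_range k b hb) ?_ S n
    change ∑ i ∈ range k, 2 ^ i + 1 = 2 ^ k
    rw [Nat.geomSum_eq le_rfl, Nat.div_one]
    exact Nat.sub_add_cancel Nat.one_le_two_pow
end

section
/- For k = 3 and for k = 4, and any n ≥ 1: zcl_k(n) = k·n if and only if n is even and the binary expansion of n has no two consecutive digits equal to 1. -/
/-! The product `∏ (x_i + x_k) ^ a_i` is homogeneous of degree `∑ a_i`, and the ideal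
`(x_i ^ (n + 1))` is spanned by the monomials with some exponent above `n`; hence
`zcl_k(n) ≤ k n`, with equality iff for some `a` the coefficient of `(x_1 ⋯ x_k) ^ n` is odd.
That coefficient is `∏ C(a_i, n)` if `∑ (a_i - n) = n` and `0` otherwise, so by Lucas's theorem
equality holds iff `n` is a sum of `k - 1` numbers none of which shares a binary digit with `n`.
With at most three summands, every digit `1` of `n` must come from a carry of exactly `1`, which
leaves no carry for the next digit: so `n` is even with no two adjacent `1`s. Conversely
`n = n / 2 + n / 2` is such a sum. -/

open MvPolynomial in
/-- `zcl k n` is the maximum of `a_1 + ... + a_(k-1)` over tuples of natural numbers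
such that the product of the `(x_i + x_k)^(a_i)` is nonzero in
`(Z/2)[x_1, ..., x_k] / (x_1^(n+1), ..., x_k^(n+1))`. (For `k ≥ 1` the ring has
`(k-1)+1 = k` variables, the last one playing the role of `x_k`.) -/
noncomputable def zcl (k n : ℕ) : ℕ :=
  sSup {s : ℕ | ∃ a : Fin (k - 1) → ℕ, s = ∑ i, a i ∧
    Ideal.Quotient.mk
      (Ideal.span (Set.range fun i : Fin (k - 1 + 1) =>
        (X i : MvPolynomial (Fin (k - 1 + 1)) (ZMod 2)) ^ (n + 1)))
      (∏ i : Fin (k - 1), (X i.castSucc + X (Fin.last (k - 1))) ^ a i) ≠ 0}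

namespace Nat

theorem forall_not_testBit_and_iff (a b : ℕ) :
    (∀ i, ¬(a.testBit i ∧ b.testBit i)) ↔
      ¬(a % 2 = 1 ∧ b % 2 = 1) ∧ ∀ i, ¬((a / 2).testBit i ∧ (b / 2).testBit i) := by
  refine ⟨fun h => ⟨by simpa [testBit_zero] using h 0,
    fun i => by simpa [testBit_add_one] using h (i + 1)⟩, fun ⟨h0, h⟩ i => ?_⟩
  cases i with
  | zero => simpa [testBit_zero] using h0
  | succ i => simpa [testBit_add_one] using h i

/-- Lucas's theorem at the prime `2`. -/
theorem odd_choose_add_iff (a b : ℕ) :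
    Odd ((a + b).choose a) ↔ ∀ i, ¬(a.testBit i ∧ b.testBit i) := by
  induction a using Nat.strong_induction_on generalizing b with
  | _ a ih =>
    rcases Nat.eq_zero_or_pos a with rfl | ha
    · simp [zero_testBit]
    have : Fact (Nat.Prime 2) := ⟨prime_two⟩
    have lucas : (a + b).choose a % 2 =
        ((a + b) % 2).choose (a % 2) * ((a + b) / 2).choose (a / 2) % 2 :=
      Choose.choose_modEq_choose_mod_mul_choose_div_nat
    rw [forall_not_testBit_and_iff, odd_iff, lucas]
    by_cases hcarry : a % 2 = 1 ∧ b % 2 = 1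
    · have hsum : (a + b) % 2 = 0 := by omega
      simp [hsum, hcarry]
    · have hsum : (a + b) % 2 = a % 2 + b % 2 := by omega
      have hdiv : (a + b) / 2 = a / 2 + b / 2 := by omega
      have hlow : (a % 2 + b % 2).choose (a % 2) = 1 := by
        rcases (by omega : a % 2 = 0 ∨ b % 2 = 0) with h | h <;> simp [h]
      rw [hsum, hlow, one_mul, hdiv, ← odd_iff, ih (a / 2) (by omega)]
      exact ⟨fun h => ⟨hcarry, h⟩, And.right⟩

/-- `c` is the carry into the lowest digit. -/
theorem sum_three_disjoint_with_carry (n : ℕ) :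
    ∀ b₁ b₂ b₃ c, c ≤ 2 → b₁ + b₂ + b₃ + c = n →
      (∀ i, ¬(n.testBit i ∧ b₁.testBit i)) → (∀ i, ¬(n.testBit i ∧ b₂.testBit i)) →
      (∀ i, ¬(n.testBit i ∧ b₃.testBit i)) →
      (n % 2 = 1 → c = 1) ∧ ∀ i, ¬(n.testBit i ∧ n.testBit (i + 1)) := by
  induction n using Nat.strong_induction_on with
  | _ n ih =>
    intro b₁ b₂ b₃ c hc hsum h₁ h₂ h₃
    rcases Nat.eq_zero_or_pos n with rfl | hn
    · simp [zero_testBit]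
    rw [forall_not_testBit_and_iff] at h₁ h₂ h₃
    obtain ⟨hodd, hadj⟩ := ih (n / 2) (by omega) (b₁ / 2) (b₂ / 2) (b₃ / 2)
      ((b₁ % 2 + b₂ % 2 + b₃ % 2 + c) / 2) (by omega) (by omega) h₁.2 h₂.2 h₃.2
    have hlow : n % 2 = 1 → c = 1 := fun h => by omega
    refine ⟨hlow, fun i => ?_⟩
    cases i with
    | zero =>
      rw [testBit_zero, testBit_add_one, testBit_zero]
      intro ⟨h0, h1⟩
      simp only [decide_eq_true_eq] at h0 h1
      have := hodd h1
      have := hlow h0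
      omega
    | succ i => simpa [testBit_add_one] using hadj i

theorem even_and_not_adjacent_of_sum_three {n : ℕ} (b₁ b₂ b₃ : ℕ) (hsum : b₁ + b₂ + b₃ = n)
    (h₁ : ∀ i, ¬(n.testBit i ∧ b₁.testBit i)) (h₂ : ∀ i, ¬(n.testBit i ∧ b₂.testBit i))
    (h₃ : ∀ i, ¬(n.testBit i ∧ b₃.testBit i)) :
    Even n ∧ ∀ i, ¬(n.testBit i ∧ n.testBit (i + 1)) := by
  obtain ⟨hodd, hadj⟩ := sum_three_disjoint_with_carry n b₁ b₂ b₃ 0 (by omega) hsum h₁ h₂ h₃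
  exact ⟨even_iff.mpr (by have := mt hodd; omega), hadj⟩

theorem even_and_not_adjacent_of_sum_disjoint {m n : ℕ} (hm : m ≤ 3) (b : Fin m → ℕ)
    (hsum : ∑ i, b i = n) (hb : ∀ i j, ¬(n.testBit j ∧ (b i).testBit j)) :
    Even n ∧ ∀ i, ¬(n.testBit i ∧ n.testBit (i + 1)) := by
  have h₀ : ∀ j, ¬(n.testBit j ∧ (0 : ℕ).testBit j) := by simp
  interval_cases m
  · exact even_and_not_adjacent_of_sum_three 0 0 0 (by simpa using hsum) h₀ h₀ h₀
  · exact even_and_not_adjacent_of_sum_three (b 0) 0 0 (by simpa using hsum) (hb 0) h₀ h₀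
  · exact even_and_not_adjacent_of_sum_three (b 0) (b 1) 0
      (by simpa [Fin.sum_univ_two] using hsum) (hb 0) (hb 1) h₀
  · exact even_and_not_adjacent_of_sum_three (b 0) (b 1) (b 2)
      (by simpa [Fin.sum_univ_three] using hsum) (hb 0) (hb 1) (hb 2)

theorem exists_sum_disjoint_of_even_of_not_adjacent {m n : ℕ} (hm : 2 ≤ m) (hn : Even n)
    (hadj : ∀ i, ¬(n.testBit i ∧ n.testBit (i + 1))) :
    ∃ b : Fin m → ℕ, ∑ i, b i = n ∧ ∀ i j, ¬(n.testBit j ∧ (b i).testBit j) := by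
  obtain ⟨m, rfl⟩ := Nat.exists_eq_add_of_le' hm
  have hhalf : ∀ j, ¬(n.testBit j ∧ (n / 2).testBit j) := by
    simpa [testBit_div_two] using hadj
  refine ⟨Fin.cons (n / 2) (Fin.cons (n / 2) 0), ?_, fun i => ?_⟩
  · simp only [Fin.sum_cons, Finset.sum_const_zero, Pi.zero_apply]
    have := even_iff.mp hn
    omega
  · exact Fin.cases hhalf (fun i => Fin.cases hhalf (fun _ => by simp) i) i

theorem sSup_eq_iff_mem {S : Set ℕ} {N : ℕ} (hne : S.Nonempty) (hle : ∀ s ∈ S, s ≤ N) :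
    sSup S = N ↔ N ∈ S :=
  ⟨fun h => h ▸ Nat.sSup_mem hne ⟨N, hle⟩, fun h => IsGreatest.csSup_eq ⟨h, hle⟩⟩

end Nat

namespace MvPolynomial

variable {σ R : Type*}

section CommSemiring

variable [CommSemiring R]

variable (σ R) in
noncomputable def powIdeal (n : ℕ) : Ideal (MvPolynomial σ R) :=
  Ideal.span (Set.range fun i : σ => X i ^ (n + 1))

theorem mem_powIdeal_iff {n : ℕ} {x : MvPolynomial σ R} :
    x ∈ powIdeal σ R n ↔ ∀ d ∈ x.support, ∃ i, n < d i := by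
  have hgen : Set.range (fun i : σ => (X i : MvPolynomial σ R) ^ (n + 1)) =
      (fun s => monomial s (1 : R)) '' Set.range fun i => Finsupp.single i (n + 1) := by
    rw [← Set.range_comp]
    simp [Function.comp_def, X_pow_eq_monomial]
  rw [powIdeal, hgen, mem_ideal_span_monomial_image]
  refine forall₂_congr fun d _ => ?_
  simp only [Set.exists_range_iff, Finsupp.single_le_iff, Nat.succ_le_iff]

theorem IsHomogeneous.degree_eq_of_mem_support {p : MvPolynomial σ R} {D : ℕ}
    (hp : p.IsHomogeneous D) {d : σ →₀ ℕ} (hd : d ∈ p.support) : d.degree = D :=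
  by_contra fun h => mem_support_iff.mp hd (hp.coeff_eq_zero h)

theorem X_add_X_pow_eq_sum [DecidableEq σ] (p q : σ) (a : ℕ) :
    (X p + X q : MvPolynomial σ R) ^ a = ∑ j ∈ Finset.range (a + 1),
      monomial (Finsupp.single p j + Finsupp.single q (a - j)) (a.choose j : R) := by
  rw [add_pow]
  refine Finset.sum_congr rfl fun j _ => ?_
  rw [X_pow_eq_monomial, X_pow_eq_monomial, monomial_mul, mul_one, ← C_eq_coe_nat, mul_comm,
    C_mul_monomial, mul_one]

variable (R) in
noncomputable def zclProd (m : ℕ) (a : Fin m → ℕ) : MvPolynomial (Fin (m + 1)) R :=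
  ∏ i : Fin m, (X i.castSucc + X (Fin.last m)) ^ a i

theorem isHomogeneous_zclProd (m : ℕ) (a : Fin m → ℕ) :
    (zclProd R m a).IsHomogeneous (∑ i, a i) := by
  simpa [zclProd] using IsHomogeneous.prod Finset.univ _ (fun i => 1 * a i)
    fun i _ => ((isHomogeneous_X R _).add (isHomogeneous_X R _)).pow (a i)

theorem zclProd_eq_sum (m : ℕ) (a : Fin m → ℕ) :
    zclProd R m a = ∑ c ∈ Fintype.piFinset fun i => Finset.range (a i + 1),
      monomial (∑ i, (Finsupp.single i.castSucc (c i) + Finsupp.single (Fin.last m) (a i - c i)))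
        (∏ i, ((a i).choose (c i) : R)) := by
  simp_rw [zclProd, X_add_X_pow_eq_sum, Finset.prod_univ_sum, monomial_sum_prod]

theorem sum_single_castSucc_add_single_last_eq_const_iff {m : ℕ} (n : ℕ) (a c : Fin m → ℕ) :
    ∑ i, (Finsupp.single i.castSucc (c i) + Finsupp.single (Fin.last m) (a i - c i)) =
        Finsupp.equivFunOnFinite.symm (fun _ => n) ↔
      (∀ i, c i = n) ∧ ∑ i, (a i - c i) = n := by
  have hcast (j : Fin m) : (∑ i, (Finsupp.single i.castSucc (c i) +
      Finsupp.single (Fin.last m) (a i - c i))) j.castSucc = c j := by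
    simp [Finsupp.finsetSum_apply, Finsupp.single_apply]
  have hlast : (∑ i, (Finsupp.single i.castSucc (c i) +
      Finsupp.single (Fin.last m) (a i - c i))) (Fin.last m) = ∑ i, (a i - c i) := by
    simp [Finsupp.finsetSum_apply, (Fin.castSucc_lt_last _).ne]
  rw [Finsupp.ext_iff, Fin.forall_fin_succ']
  simp only [hcast, hlast, Finsupp.coe_equivFunOnFinite_symm]

/-- Only the term `x_i ^ n x_k ^ (a_i - n)` of each factor `(x_i + x_k) ^ a_i` can contribute. -/
theorem coeff_const_zclProd (m n : ℕ) (a : Fin m → ℕ) :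
    coeff (Finsupp.equivFunOnFinite.symm fun _ => n) (zclProd R m a) =
      if ∑ i, (a i - n) = n then ∏ i, ((a i).choose n : R) else 0 := by
  classical
  rw [zclProd_eq_sum, coeff_sum]
  simp only [coeff_monomial, sum_single_castSucc_add_single_last_eq_const_iff]
  rw [Finset.sum_eq_single fun _ => n]
  · simp
  · intro c _ hc
    rw [if_neg]
    rintro ⟨h, -⟩
    exact hc (_root_.funext h)
  · intro hnot
    obtain ⟨i, hi⟩ : ∃ i, a i < n := by simpa [Fintype.mem_piFinset, Nat.lt_succ_iff] using hnot
    have hzero : ((a i).choose n : R) = 0 := by simp [Nat.choose_eq_zero_of_lt hi]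
    simp [Finset.prod_eq_zero (f := fun i => ((a i).choose n : R)) (Finset.mem_univ i) hzero]

end CommSemiring

section CommRing

variable [CommRing R]

theorem mk_powIdeal_ne_zero_iff {n : ℕ} {x : MvPolynomial σ R} :
    Ideal.Quotient.mk (powIdeal σ R n) x ≠ 0 ↔ ∃ d ∈ x.support, ∀ i, d i ≤ n := by
  simp [Ideal.Quotient.eq_zero_iff_mem, mem_powIdeal_iff]

variable [Fintype σ]

theorem IsHomogeneous.le_card_mul_of_mk_powIdeal_ne_zero {p : MvPolynomial σ R} {D n : ℕ}
    (hp : p.IsHomogeneous D) (h : Ideal.Quotient.mk (powIdeal σ R n) p ≠ 0) :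
    D ≤ Fintype.card σ * n := by
  obtain ⟨d, hd, hle⟩ := mk_powIdeal_ne_zero_iff.mp h
  calc D = ∑ i, d i := by rw [← hp.degree_eq_of_mem_support hd, Finsupp.degree_eq_sum]
    _ ≤ ∑ _i : σ, n := Finset.sum_le_sum fun i _ => hle i
    _ = Fintype.card σ * n := by simp

theorem IsHomogeneous.mk_powIdeal_ne_zero_iff {p : MvPolynomial σ R} {n : ℕ}
    (hp : p.IsHomogeneous (Fintype.card σ * n)) :
    Ideal.Quotient.mk (powIdeal σ R n) p ≠ 0 ↔
      coeff (Finsupp.equivFunOnFinite.symm fun _ => n) p ≠ 0 := by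
  rw [MvPolynomial.mk_powIdeal_ne_zero_iff]
  constructor
  · rintro ⟨d, hd, hle⟩
    have hsum : ∑ i, d i = ∑ _i : σ, n := by
      rw [← Finsupp.degree_eq_sum, hp.degree_eq_of_mem_support hd]
      simp
    have hconst : d = Finsupp.equivFunOnFinite.symm fun _ => n := by
      ext i
      exact (Finset.sum_eq_sum_iff_of_le fun i _ => hle i).mp hsum i (Finset.mem_univ i)
    exact hconst ▸ mem_support_iff.mp hd
  · exact fun h => ⟨_, mem_support_iff.mpr h, fun _ => le_rfl⟩

end CommRing

theorem coeff_const_zclProd_ne_zero_iff (m n : ℕ) (a : Fin m → ℕ) :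
    coeff (Finsupp.equivFunOnFinite.symm fun _ => n) (zclProd (ZMod 2) m a) ≠ 0 ↔
      ∃ b : Fin m → ℕ, a = (fun i => n + b i) ∧ ∑ i, b i = n ∧
        ∀ i j, ¬(n.testBit j ∧ (b i).testBit j) := by
  rw [coeff_const_zclProd]
  split_ifs with h
  · simp only [Finset.prod_ne_zero_iff, Finset.mem_univ, true_implies,
      ZMod.natCast_ne_zero_iff_odd]
    constructor
    · intro hodd
      have hle (i : Fin m) : n ≤ a i := by
        by_contra hlt
        simpa [Nat.choose_eq_zero_of_lt (not_le.mp hlt)] using hodd i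
      refine ⟨fun i => a i - n, _root_.funext fun i => (Nat.add_sub_cancel' (hle i)).symm, h, fun i => ?_⟩
      rw [← Nat.odd_choose_add_iff, Nat.add_sub_cancel' (hle i)]
      exact hodd i
    · rintro ⟨b, rfl, -, hb⟩ i
      simpa [Nat.odd_choose_add_iff] using hb i
  · refine iff_of_false (fun h0 => h0 rfl) ?_
    rintro ⟨b, rfl, hb, -⟩
    exact h (by simpa using hb)

end MvPolynomial

open MvPolynomial

theorem zcl_succ (m n : ℕ) :
    zcl (m + 1) n = sSup {s | ∃ a : Fin m → ℕ, s = ∑ i, a i ∧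
      Ideal.Quotient.mk (powIdeal (Fin (m + 1)) (ZMod 2) n) (zclProd (ZMod 2) m a) ≠ 0} :=
  rfl

theorem zcl_succ_eq_iff (m n : ℕ) :
    zcl (m + 1) n = (m + 1) * n ↔
      ∃ b : Fin m → ℕ, ∑ i, b i = n ∧ ∀ i j, ¬(n.testBit j ∧ (b i).testBit j) := by
  have hmk (a : Fin m → ℕ) (hsum : ∑ i, a i = (m + 1) * n) :
      Ideal.Quotient.mk (powIdeal (Fin (m + 1)) (ZMod 2) n) (zclProd (ZMod 2) m a) ≠ 0 ↔
        ∃ b : Fin m → ℕ, a = (fun i => n + b i) ∧ ∑ i, b i = n ∧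
          ∀ i j, ¬(n.testBit j ∧ (b i).testBit j) := by
    have hhom : (zclProd (ZMod 2) m a).IsHomogeneous (Fintype.card (Fin (m + 1)) * n) := by
      rw [Fintype.card_fin, ← hsum]
      exact isHomogeneous_zclProd m a
    rw [hhom.mk_powIdeal_ne_zero_iff, coeff_const_zclProd_ne_zero_iff]
  rw [zcl_succ, Nat.sSup_eq_iff_mem]
  · constructor
    · rintro ⟨a, hsum, hne⟩
      obtain ⟨b, -, hb⟩ := (hmk a hsum.symm).mp hne
      exact ⟨b, hb⟩
    · rintro ⟨b, hb⟩
      have hsum : ∑ i, (n + b i) = (m + 1) * n := by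
        rw [Finset.sum_add_distrib, hb.1]
        simp [add_mul]
      exact ⟨_, hsum.symm, (hmk _ hsum).mpr ⟨b, rfl, hb⟩⟩
  · refine ⟨0, 0, by simp, mk_powIdeal_ne_zero_iff.mpr ⟨0, ?_, fun _ => Nat.zero_le _⟩⟩
    simp [zclProd]
  · rintro s ⟨a, rfl, hne⟩
    simpa using (isHomogeneous_zclProd m a).le_card_mul_of_mk_powIdeal_ne_zero hne

theorem zcl_eq_iff_of_three_four_general (k n : ℕ) (hk : k = 3 ∨ k = 4) :
    zcl k n = k * n ↔
      Even n ∧ ∀ i, ¬(n.testBit i ∧ n.testBit (i + 1)) := by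
  obtain ⟨m, rfl, hm₂, hm₃⟩ : ∃ m, k = m + 1 ∧ 2 ≤ m ∧ m ≤ 3 :=
    ⟨k - 1, by omega, by omega, by omega⟩
  rw [zcl_succ_eq_iff]
  exact ⟨fun ⟨b, hsum, hb⟩ => Nat.even_and_not_adjacent_of_sum_disjoint hm₃ b hsum hb,
    fun ⟨hn, hadj⟩ => Nat.exists_sum_disjoint_of_even_of_not_adjacent hm₂ hn hadj⟩

/-- For `k = 3` or `k = 4` and `n ≥ 1`: `zcl_k(n) = k*n` iff `n` is even and the binary
expansion of `n` has no two consecutive digits equal to 1. -/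
theorem zcl_eq_iff_of_three_four (k n : ℕ) (hk : k = 3 ∨ k = 4) (hn : 1 ≤ n) :
    zcl k n = k * n ↔
      Even n ∧ ∀ i, ¬(n.testBit i ∧ n.testBit (i + 1)) :=
  zcl_eq_iff_of_three_four_general k n hk
end
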